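/- The SCAD thresholding rule θ̂(z) minimizes θ ↦ (1/2)(z-θ)² + p_λ(|θ|) over ℝ, where p_λ is the SCAD penalty with parameter a > 2. -/

import Mathlib

/-- The SCAD penalty of Fan (1997). -/
noncomputable def scadPenalty (a lam θ : ℝ) : ℝ :=
  if θ ≤ lam then lam * θ
  else if θ ≤ a * lam then -(θ ^ 2 - 2 * a * lam * θ + lam ^ 2) / (2 * (a - 1))
  else (a + 1) * lam ^ 2 / 2

/-- The SCAD thresholding rule with parameters `a > 2` and `λ > 0`. -/
noncomputable def scadThreshold (a lam z : ℝ) : ℝ :=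
  if |z| ≤ 2 * lam then Real.sign z * max (|z| - lam) 0
  else if |z| ≤ a * lam then ((a - 1) * z - Real.sign z * a * lam) / (a - 2)
  else z

/-! By oddness of the rule and since `(z - |θ|)² ≤ (z - θ)²` for `z ≥ 0`, it suffices to take
`z, θ ≥ 0`. The middle piece `q(θ) = λθ - (θ - λ)² / (2(a - 1))` of the penalty, extended to all
of `ℝ`, lies below the penalty, since it falls short of the outer pieces `λθ` and `(a + 1)λ²/2` by
`(θ - λ)² / (2(a - 1))` and `(aλ - θ)² / (2(a - 1))` respectively.
For `a > 2`, `½(z - θ)² + q(θ)` is a convex quadratic with vertex `((a - 1)z - aλ)/(a - 2)`, which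
settles `2λ < z ≤ aλ`. In the other ranges of `z`, compare with the exact pieces `λθ` and
`(a + 1)λ²/2` outside `[λ, aλ]`, and inside with `q`, whose correction term `(θ - λ)²/(2(a - 1))`
is at most `(θ - λ)²/2` because `a ≥ 2`. -/

noncomputable def scadQuadratic (a lam θ : ℝ) : ℝ :=
  lam * θ - (θ - lam) ^ 2 / (2 * (a - 1))

noncomputable def scadObjective (a lam z θ : ℝ) : ℝ :=
  1 / 2 * (z - θ) ^ 2 + scadPenalty a lam |θ|

section
variable {a lam z θ : ℝ}

lemma scadQuadratic_eq (ha : a ≠ 1) :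
    scadQuadratic a lam θ = (a + 1) * lam ^ 2 / 2 - (a * lam - θ) ^ 2 / (2 * (a - 1)) := by
  have : a - 1 ≠ 0 := sub_ne_zero.2 ha
  unfold scadQuadratic
  field_simp
  ring

lemma scadPenalty_of_le (h : θ ≤ lam) : scadPenalty a lam θ = lam * θ := if_pos h

lemma scadPenalty_of_lt_of_le (ha : a ≠ 1) (h₁ : lam < θ) (h₂ : θ ≤ a * lam) :
    scadPenalty a lam θ = scadQuadratic a lam θ := by
  have : a - 1 ≠ 0 := sub_ne_zero.2 ha
  rw [scadPenalty, if_neg h₁.not_ge, if_pos h₂, scadQuadratic]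
  field_simp
  ring

lemma scadPenalty_of_lt (ha : 1 ≤ a) (hlam : 0 ≤ lam) (h : a * lam < θ) :
    scadPenalty a lam θ = (a + 1) * lam ^ 2 / 2 := by
  have : lam ≤ a * lam := le_mul_of_one_le_left hlam ha
  rw [scadPenalty, if_neg (by linarith), if_neg h.not_ge]

lemma scadQuadratic_le_scadPenalty (ha : 1 < a) (θ : ℝ) :
    scadQuadratic a lam θ ≤ scadPenalty a lam θ := by
  rcases le_or_gt θ lam with h₁ | h₁
  · rw [scadPenalty_of_le h₁, scadQuadratic]
    linarith [div_nonneg (sq_nonneg (θ - lam)) (by linarith : (0 : ℝ) ≤ 2 * (a - 1))]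
  rcases le_or_gt θ (a * lam) with h₂ | h₂
  · exact (scadPenalty_of_lt_of_le ha.ne' h₁ h₂).ge
  · rw [scadPenalty, if_neg h₁.not_ge, if_neg h₂.not_ge, scadQuadratic_eq ha.ne']
    linarith [div_nonneg (sq_nonneg (a * lam - θ)) (by linarith : (0 : ℝ) ≤ 2 * (a - 1))]

lemma half_sq_add_scadQuadratic_le (ha : 2 < a) {T : ℝ} (hT : (a - 2) * T = (a - 1) * z - a * lam)
    (θ : ℝ) :
    1 / 2 * (z - T) ^ 2 + scadQuadratic a lam T ≤ 1 / 2 * (z - θ) ^ 2 + scadQuadratic a lam θ := by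
  have ha₁ : a - 1 ≠ 0 := by linarith
  have hsq : 1 / 2 * (z - θ) ^ 2 + scadQuadratic a lam θ
      = 1 / 2 * (z - T) ^ 2 + scadQuadratic a lam T + (a - 2) * (θ - T) ^ 2 / (2 * (a - 1)) := by
    unfold scadQuadratic
    field_simp
    linear_combination 2 * (θ - T) * hT
  rw [hsq]
  have : 0 ≤ (a - 2) * (θ - T) ^ 2 / (2 * (a - 1)) := by
    apply div_nonneg <;> nlinarith [sq_nonneg (θ - T)]
  linarith

lemma div_two_mul_sub_one_le (ha : 2 ≤ a) {x : ℝ} (hx : 0 ≤ x) : x / (2 * (a - 1)) ≤ x / 2 :=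
  div_le_div_of_nonneg_left hx two_pos (by linarith)

lemma sq_div_le_half_sq_add_scadPenalty (ha : 2 ≤ a) (hz₀ : 0 ≤ z) (hz : z ≤ lam) (hθ : 0 ≤ θ) :
    z ^ 2 / 2 ≤ 1 / 2 * (z - θ) ^ 2 + scadPenalty a lam θ := by
  rcases le_or_gt θ lam with hθlam | hθlam
  · rw [scadPenalty_of_le hθlam]
    nlinarith [mul_nonneg hθ (sub_nonneg.2 hz)]
  · have hq := scadQuadratic_le_scadPenalty (a := a) (lam := lam) (by linarith) θ
    have hd := div_two_mul_sub_one_le ha (sq_nonneg (θ - lam))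
    rw [scadQuadratic] at hq
    nlinarith [mul_nonneg hθ (sub_nonneg.2 hz), mul_nonneg (hz₀.trans hz) (sub_nonneg.2 hθlam.le)]

lemma mul_sub_sq_div_le_half_sq_add_scadPenalty (ha : 2 ≤ a) (hz : z ≤ 2 * lam) :
    lam * z - lam ^ 2 / 2 ≤ 1 / 2 * (z - θ) ^ 2 + scadPenalty a lam θ := by
  rcases le_or_gt θ lam with hθlam | hθlam
  · rw [scadPenalty_of_le hθlam]
    nlinarith [sq_nonneg (z - θ - lam)]
  · have hq := scadQuadratic_le_scadPenalty (a := a) (lam := lam) (by linarith) θ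
    have hd := div_two_mul_sub_one_le ha (sq_nonneg (θ - lam))
    rw [scadQuadratic] at hq
    nlinarith [mul_nonneg (sub_nonneg.2 hz) (by linarith : (0 : ℝ) ≤ 2 * θ - z)]

lemma scadPenalty_top_le_half_sq_add_scadPenalty (ha : 2 ≤ a) (hlam : 0 ≤ lam) (hz : a * lam ≤ z) :
    (a + 1) * lam ^ 2 / 2 ≤ 1 / 2 * (z - θ) ^ 2 + scadPenalty a lam θ := by
  rcases le_or_gt θ (a * lam) with hθ | hθ
  · have hq := scadQuadratic_le_scadPenalty (a := a) (lam := lam) (by linarith) θ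
    have hd := div_two_mul_sub_one_le ha (sq_nonneg (a * lam - θ))
    rw [scadQuadratic_eq (by linarith)] at hq
    nlinarith [mul_nonneg (sub_nonneg.2 hz) (by linarith : (0 : ℝ) ≤ z + a * lam - 2 * θ)]
  · rw [scadPenalty_of_lt (by linarith) hlam hθ]
    nlinarith [sq_nonneg (z - θ)]

lemma scadThreshold_of_nonneg_of_le (hz₀ : 0 ≤ z) (hz : z ≤ lam) : scadThreshold a lam z = 0 := by
  rw [scadThreshold, abs_of_nonneg hz₀, if_pos (by linarith), max_eq_right (by linarith), mul_zero]

lemma scadThreshold_of_lt_of_le (h₁ : lam < z) (h₂ : z ≤ 2 * lam) :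
    scadThreshold a lam z = z - lam := by
  rw [scadThreshold, abs_of_pos (by linarith), if_pos h₂, Real.sign_of_pos (by linarith),
    max_eq_left (by linarith), one_mul]

lemma scadThreshold_of_two_mul_lt_of_le (hlam : 0 ≤ lam) (h₁ : 2 * lam < z) (h₂ : z ≤ a * lam) :
    scadThreshold a lam z = ((a - 1) * z - a * lam) / (a - 2) := by
  rw [scadThreshold, abs_of_pos (by linarith), if_neg h₁.not_ge, if_pos h₂,
    Real.sign_of_pos (by linarith), one_mul]

lemma scadThreshold_of_lt (ha : 2 ≤ a) (hlam : 0 ≤ lam) (h : a * lam < z) :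
    scadThreshold a lam z = z := by
  have : 2 * lam ≤ a * lam := mul_le_mul_of_nonneg_right ha hlam
  rw [scadThreshold, abs_of_pos (by linarith), if_neg (by linarith), if_neg h.not_ge]

lemma scadThreshold_neg (a lam z : ℝ) : scadThreshold a lam (-z) = -scadThreshold a lam z := by
  unfold scadThreshold
  rw [abs_neg, Real.sign_neg]
  split_ifs <;> ring

lemma scadObjective_neg_neg (a lam z θ : ℝ) :
    scadObjective a lam (-z) (-θ) = scadObjective a lam z θ := by
  rw [scadObjective, scadObjective, abs_neg]
  ring

lemma scadObjective_abs_le (hz : 0 ≤ z) : scadObjective a lam z |θ| ≤ scadObjective a lam z θ := by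
  rw [scadObjective, scadObjective, abs_abs]
  nlinarith [mul_nonneg hz (sub_nonneg.2 (le_abs_self θ)), sq_abs θ]

lemma scadObjective_scadThreshold_le_of_nonneg (ha : 2 < a) (hlam : 0 ≤ lam) (hz : 0 ≤ z)
    (hθ : 0 ≤ θ) : scadObjective a lam z (scadThreshold a lam z) ≤ scadObjective a lam z θ := by
  rw [scadObjective, scadObjective, abs_of_nonneg hθ]
  rcases le_or_gt z lam with hz₁ | hz₁
  · rw [scadThreshold_of_nonneg_of_le hz hz₁, abs_zero, scadPenalty_of_le hlam]
    linarith [sq_div_le_half_sq_add_scadPenalty (a := a) ha.le hz hz₁ hθ]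
  rcases le_or_gt z (2 * lam) with hz₂ | hz₂
  · rw [scadThreshold_of_lt_of_le hz₁ hz₂, abs_of_pos (by linarith),
      scadPenalty_of_le (by linarith)]
    linarith [mul_sub_sq_div_le_half_sq_add_scadPenalty (a := a) (θ := θ) ha.le hz₂]
  rcases le_or_gt z (a * lam) with hz₃ | hz₃
  · set T := ((a - 1) * z - a * lam) / (a - 2) with hT
    have hT' : (a - 2) * T = (a - 1) * z - a * lam := mul_div_cancel₀ _ (by linarith)
    have hTlam : lam < T := by nlinarith
    have hTa : T ≤ a * lam := by nlinarith
    rw [scadThreshold_of_two_mul_lt_of_le hlam hz₂ hz₃, abs_of_pos (by linarith),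
      scadPenalty_of_lt_of_le (by linarith) hTlam hTa]
    linarith [half_sq_add_scadQuadratic_le ha hT' θ,
      scadQuadratic_le_scadPenalty (a := a) (lam := lam) (by linarith) θ]
  · rw [scadThreshold_of_lt ha.le hlam hz₃, abs_of_nonneg hz,
      scadPenalty_of_lt (by linarith) hlam hz₃]
    linarith [scadPenalty_top_le_half_sq_add_scadPenalty (θ := θ) ha.le hlam hz₃.le]

end

/-- The SCAD thresholding rule `θ̂(z)` minimizes `θ ↦ (1/2)(z - θ)² + p_λ(|θ|)` over `ℝ`,
where `p_λ` is the SCAD penalty with parameters `a > 2` and `λ > 0`. -/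
theorem scad_threshold_minimizes (a lam z : ℝ) (ha : 2 < a) (hlam : 0 < lam) :
    ∀ θ : ℝ,
      (1 / 2) * (z - scadThreshold a lam z) ^ 2 + scadPenalty a lam |scadThreshold a lam z| ≤
        (1 / 2) * (z - θ) ^ 2 + scadPenalty a lam |θ| := by
  intro θ
  change scadObjective a lam z (scadThreshold a lam z) ≤ scadObjective a lam z θ
  wlog hz : 0 ≤ z generalizing z θ
  · have h := this (-z) (-θ) (by linarith)
    rwa [scadThreshold_neg, scadObjective_neg_neg, scadObjective_neg_neg] at h
  calc scadObjective a lam z (scadThreshold a lam z)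
      ≤ scadObjective a lam z |θ| :=
        scadObjective_scadThreshold_le_of_nonneg ha hlam.le hz (abs_nonneg θ)
    _ ≤ scadObjective a lam z θ := scadObjective_abs_le hz
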